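/- arXiv:1706.08252 — 2 statements merged into one kernel-verified Lean document; each statement's English description precedes it below -/
import Mathlib

section
/- Let H(m,p) = (1/β)|p|^β/(m+μ)^α with μ > 0, 1 < β ≤ 2 and 0 < α ≤ 4(β-1)/β. Then for all m ≥ 0, z ≥ -m, p, r ∈ ℝ^N with (z,r) ≠ (0,0), setting m_s = m + s z and p_s = p + s r, the function h(s) = -z H(m_s, p_s) + m_s ∇_p H(m_s, p_s)·r is nondecreasing on [0,1]. -/
/-!
Along the segment `s ↦ (m + s z, p + s r)` the function `h` is continuous, and wherever
`p + s r ≠ 0` it is differentiable with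
`h' = |v|^(β-4) c^(-α-1) / β · (α X² - αβ M q X + β M c ((β-2) q² + |v|² |r|²))`,
where `v = p + s r`, `M = m + s z`, `c = M + μ`, `q = ⟪v, r⟫` and `X = z |v|²`.
By Cauchy–Schwarz the bracket is at least the quadratic form
`α X² - αβ M q X + β(β-1) M c q²` in `X`, whose discriminant
`αβ M q² (αβ M - 4(β-1) c)` is `≤ 0` because `M ≤ c` and `αβ ≤ 4(β-1)`.
As `v` vanishes at most once on the segment (or identically, when `h = 0`),
`h` is nondecreasing.
-/

open Real Set
open scoped RealInnerProductSpace

theorem structural_quadratic_nonneg {α β M c X q w R : ℝ} (hα : 0 ≤ α) (hβ : 1 ≤ β)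
    (hαβ : α * β ≤ 4 * (β - 1)) (hM : 0 ≤ M) (hMc : M ≤ c) (hq : q ^ 2 ≤ w * R) :
    0 ≤ α * X ^ 2 - α * β * M * q * X + β * M * c * ((β - 2) * q ^ 2 + w * R) := by
  have hcoef : 0 ≤ β * M * c := by have := hM.trans hMc; positivity
  have hreduce : β * M * c * ((β - 1) * q ^ 2) ≤ β * M * c * ((β - 2) * q ^ 2 + w * R) :=
    mul_le_mul_of_nonneg_left (by linarith) hcoef
  rcases hα.eq_or_lt with rfl | hα
  · nlinarith [mul_nonneg hcoef (mul_nonneg (sub_nonneg.2 hβ) (sq_nonneg q))]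
  · have hdisc : α * β * M ≤ 4 * (β - 1) * c := by
      nlinarith [mul_le_mul_of_nonneg_left hMc (by positivity : 0 ≤ α * β)]
    -- `4α·(form) = (2αX - αβMq)² + αβMq² (4(β-1)c - αβM)`
    have hscaled :
        0 ≤ 4 * α * (α * X ^ 2 - α * β * M * q * X + β * M * c * ((β - 1) * q ^ 2)) := by
      nlinarith [sq_nonneg (2 * α * X - α * β * M * q),
        mul_nonneg (mul_nonneg (mul_nonneg hα.le (by linarith : (0:ℝ) ≤ β)) hM) (sq_nonneg q)]
    nlinarith [(mul_nonneg_iff_of_pos_left (by positivity : (0:ℝ) < 4 * α)).mp hscaled]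

section

variable {E : Type*} [NormedAddCommGroup E] [InnerProductSpace ℝ E]

theorem HasDerivAt.norm_rpow_of_ne_zero {f : ℝ → E} {f' : E} {x : ℝ} (hf : HasDerivAt f f' x)
    (hx : f x ≠ 0) (γ : ℝ) :
    HasDerivAt (fun t => ‖f t‖ ^ γ) (γ * ‖f x‖ ^ (γ - 2) * ⟪f x, f'⟫) x := by
  have h := hf.norm_sq.rpow_const (p := γ / 2) (Or.inl (by positivity))
  convert h using 1
  · funext t
    rw [← Real.rpow_natCast_mul (norm_nonneg _), Nat.cast_ofNat, mul_div_cancel₀ γ two_ne_zero]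
  · rw [← Real.rpow_natCast_mul (norm_nonneg _)]
    ring_nf

theorem continuous_norm_rpow_smul_self {F : Type*} [NormedAddCommGroup F] [NormedSpace ℝ F]
    {e : ℝ} (he : -1 < e) : Continuous fun x : F => ‖x‖ ^ e • x := by
  refine continuous_iff_continuousAt.2 fun x => ?_
  rcases eq_or_ne x 0 with rfl | hx
  · have hlim : Filter.Tendsto (fun y : F => ‖y‖ ^ (e + 1)) (nhds 0) (nhds 0) := by
      simpa [(by linarith : e + 1 ≠ 0)] using
        (continuous_norm.rpow_const (p := e + 1) fun _ => Or.inr (by linarith)).tendsto (0 : F)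
    rw [ContinuousAt, smul_zero]
    refine squeeze_zero_norm (fun y => ?_) hlim
    rw [norm_smul, Real.norm_of_nonneg (by positivity),
      Real.rpow_add_one' (norm_nonneg y) (by linarith)]
  · exact (continuous_norm.continuousAt.rpow_const (Or.inl (norm_ne_zero_iff.2 hx))).smul
      continuousAt_id

theorem monotoneOn_Icc_of_hasDerivAt_nonneg_of_ne {f f' : ℝ → ℝ} {a b x₀ : ℝ}
    (hf : ContinuousOn f (Icc a b)) (hf' : ∀ x ∈ Ioo a b, x ≠ x₀ → HasDerivAt f (f' x) x)
    (hf'₀ : ∀ x ∈ Ioo a b, x ≠ x₀ → 0 ≤ f' x) : MonotoneOn f (Icc a b) := by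
  have hsub : ∀ {c d}, a ≤ c → d ≤ b → x₀ ∉ Ioo c d → MonotoneOn f (Icc c d) := by
    intro c d hac hdb hx₀
    have hIoo : Ioo c d ⊆ Ioo a b := Ioo_subset_Ioo hac hdb
    have hne : ∀ x ∈ Ioo c d, x ≠ x₀ := fun x hx h => hx₀ (h ▸ hx)
    refine monotoneOn_of_hasDerivWithinAt_nonneg (f' := f') (convex_Icc c d)
      (hf.mono (Icc_subset_Icc hac hdb)) (fun x hx => ?_) (fun x hx => ?_) <;>
      simp only [interior_Icc] at hx ⊢
    · exact (hf' x (hIoo hx) (hne x hx)).hasDerivWithinAt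
    · exact hf'₀ x (hIoo hx) (hne x hx)
  by_cases hx₀ : x₀ ∈ Ioo a b
  · rw [← Icc_union_Icc_eq_Icc hx₀.1.le hx₀.2.le]
    exact (hsub le_rfl hx₀.2.le fun h => h.2.false).union_right
      (hsub hx₀.1.le le_rfl fun h => h.1.false) (isGreatest_Icc hx₀.1.le)
      (isLeast_Icc hx₀.2.le)
  · exact hsub le_rfl le_rfl hx₀

theorem exists_forall_ne_add_smul_ne_zero {p r : E} (h : (p, r) ≠ 0) :
    ∃ s₀ : ℝ, ∀ s, s ≠ s₀ → p + s • r ≠ 0 := by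
  by_cases hex : ∃ s₀ : ℝ, p + s₀ • r = 0
  · obtain ⟨s₀, hs₀⟩ := hex
    refine ⟨s₀, fun s hs hzero => ?_⟩
    have hr : r ≠ 0 := by
      rintro rfl
      exact h (by simpa using hs₀)
    have : (s - s₀) • r = 0 := by
      rw [sub_smul, ← add_sub_add_left_eq_sub _ _ p, hzero, hs₀, sub_zero]
    exact hs (sub_eq_zero.1 ((smul_eq_zero.1 this).resolve_right hr))
  · rw [not_exists] at hex
    exact ⟨0, fun s _ => hex s⟩

noncomputable def modelHamiltonian (μ α β m : ℝ) (p : E) : ℝ :=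
  1 / β * ‖p‖ ^ β / (m + μ) ^ α

noncomputable def modelHamiltonianGrad (μ α β m : ℝ) (p : E) : E :=
  (‖p‖ ^ (β - 2) / (m + μ) ^ α) • p

noncomputable def structuralFun (μ α β m z : ℝ) (p r : E) (s : ℝ) : ℝ :=
  -z * modelHamiltonian μ α β (m + s * z) (p + s • r)
    + (m + s * z) * ⟪modelHamiltonianGrad μ α β (m + s * z) (p + s • r), r⟫

variable {μ α β m z : ℝ} {p r : E}

theorem structuralFun_eq (s : ℝ) :
    structuralFun μ α β m z p r s =
      (-z / β * ‖p + s • r‖ ^ β + (m + s * z) * (‖p + s • r‖ ^ (β - 2) * ⟪p + s • r, r⟫))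
        / (m + s * z + μ) ^ α := by
  simp only [structuralFun, modelHamiltonian, modelHamiltonianGrad, real_inner_smul_left]
  ring

theorem continuousOn_structuralFun {S : Set ℝ} (hβ : 1 < β)
    (hc : ∀ s ∈ S, 0 < m + s * z + μ) :
    ContinuousOn (structuralFun μ α β m z p r) S := by
  have hpow : ContinuousOn (fun s => (m + s * z + μ) ^ α) S :=
    (by fun_prop : ContinuousOn (fun s => m + s * z + μ) S).rpow_const
      fun s hs => Or.inl (hc s hs).ne'
  have hnorm : Continuous fun s : ℝ => ‖p + s • r‖ ^ β :=
    (by fun_prop : Continuous fun s : ℝ => ‖p + s • r‖).rpow_const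
      fun _ => Or.inr (by linarith)
  have hgrad : Continuous fun s : ℝ => ⟪‖p + s • r‖ ^ (β - 2) • (p + s • r), r⟫ :=
    ((continuous_norm_rpow_smul_self (by linarith)).comp
      (by fun_prop : Continuous fun s : ℝ => p + s • r)).inner continuous_const
  simp only [real_inner_smul_left] at hgrad
  rw [funext structuralFun_eq]
  exact ContinuousOn.div (by fun_prop) hpow fun s hs => (rpow_pos_of_pos (hc s hs) α).ne'

noncomputable def structuralFunDeriv (μ α β m z : ℝ) (p r : E) (s : ℝ) : ℝ :=
  ‖p + s • r‖ ^ β / (β * (m + s * z + μ) ^ α * (m + s * z + μ) * ‖p + s • r‖ ^ 4) *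
    (α * (z * ‖p + s • r‖ ^ 2) ^ 2
      - α * β * (m + s * z) * ⟪p + s • r, r⟫ * (z * ‖p + s • r‖ ^ 2)
      + β * (m + s * z) * (m + s * z + μ)
        * ((β - 2) * ⟪p + s • r, r⟫ ^ 2 + ‖p + s • r‖ ^ 2 * ‖r‖ ^ 2))

theorem hasDerivAt_structuralFun {s : ℝ} (hβ : β ≠ 0) (hv : p + s • r ≠ 0)
    (hc : 0 < m + s * z + μ) :
    HasDerivAt (structuralFun μ α β m z p r) (structuralFunDeriv μ α β m z p r s) s := by
  have hline : HasDerivAt (fun t : ℝ => p + t • r) r s := by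
    simpa using ((hasDerivAt_id s).smul_const r).const_add p
  have hM : HasDerivAt (fun t : ℝ => m + t * z) z s := by
    simpa using ((hasDerivAt_id s).mul_const z).const_add m
  have hinner := HasDerivAt.inner ℝ hline (hasDerivAt_const s r)
  have hnum := ((hline.norm_rpow_of_ne_zero hv β).const_mul (-z / β)).add
    (hM.mul ((hline.norm_rpow_of_ne_zero hv (β - 2)).mul hinner))
  have hden := (hM.add_const μ).rpow_const (p := α) (Or.inl hc.ne')
  have hn : 0 < ‖p + s • r‖ := norm_pos_iff.2 hv
  rw [funext structuralFun_eq]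
  refine (hnum.div hden (rpow_pos_of_pos hc α).ne').congr_deriv ?_
  unfold structuralFunDeriv
  have hcα : 0 < (m + s * z + μ) ^ α := rpow_pos_of_pos hc α
  simp only [Pi.add_apply, Pi.mul_apply, inner_zero_right, zero_add, real_inner_self_eq_norm_sq,
    rpow_sub hc, rpow_sub hn, rpow_one, rpow_two]
  generalize m + s * z = M at hc hcα ⊢
  generalize M + μ = c at hc hcα ⊢
  generalize c ^ α = C at hcα ⊢
  field_simp
  ring

theorem structuralFunDeriv_nonneg {s : ℝ} (hβ : 1 ≤ β) (hα : 0 ≤ α)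
    (hαβ : α * β ≤ 4 * (β - 1)) (hM : 0 ≤ m + s * z) (hμ : 0 ≤ μ) :
    0 ≤ structuralFunDeriv μ α β m z p r s := by
  have hc : 0 ≤ m + s * z + μ := by linarith
  have hcs : ⟪p + s • r, r⟫ ^ 2 ≤ ‖p + s • r‖ ^ 2 * ‖r‖ ^ 2 := by
    rw [← mul_pow, ← sq_abs]
    exact pow_le_pow_left₀ (abs_nonneg _) (abs_real_inner_le_norm _ _) 2
  have hden : 0 ≤ β * (m + s * z + μ) ^ α * (m + s * z + μ) * ‖p + s • r‖ ^ 4 := by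
    have := rpow_nonneg hc α
    have : 0 ≤ β := by linarith
    positivity
  exact mul_nonneg (div_nonneg (by positivity) hden)
    (structural_quadratic_nonneg hα hβ hαβ hM (by linarith) hcs)

end

theorem stmt6_general (N : ℕ) (μ α β : ℝ) (hμ : 0 < μ) (hβ1 : 1 < β)
    (hα0 : 0 < α) (hα : α ≤ 4 * (β - 1) / β)
    (m z : ℝ) (p r : EuclideanSpace ℝ (Fin N)) (hm : 0 ≤ m) (hz : -m ≤ z) :
    MonotoneOn (fun s : ℝ =>
      -z * ((1 / β) * ‖p + s • r‖ ^ β / (m + s * z + μ) ^ α)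
        + (m + s * z) *
          (inner ℝ ((‖p + s • r‖ ^ (β - 2) / (m + s * z + μ) ^ α) • (p + s • r)) r : ℝ))
      (Set.Icc 0 1) := by
  have hβ0 : 0 < β := by linarith
  have hM : ∀ s ∈ Icc (0 : ℝ) 1, 0 ≤ m + s * z := fun s hs => by nlinarith [hs.1, hs.2]
  have hc : ∀ s ∈ Icc (0 : ℝ) 1, 0 < m + s * z + μ := fun s hs => by linarith [hM s hs]
  change MonotoneOn (structuralFun μ α β m z p r) (Icc 0 1)
  rcases eq_or_ne (p, r) 0 with hpr | hpr
  · obtain ⟨rfl, rfl⟩ := Prod.mk_eq_zero.1 hpr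
    have hzero : structuralFun μ α β m z (0 : EuclideanSpace ℝ (Fin N)) 0 = 0 := by
      funext s
      simp [structuralFun, modelHamiltonian, zero_rpow hβ0.ne']
    rw [hzero]
    exact monotoneOn_const
  obtain ⟨s₀, hs₀⟩ := exists_forall_ne_add_smul_ne_zero hpr
  exact monotoneOn_Icc_of_hasDerivAt_nonneg_of_ne (continuousOn_structuralFun hβ1 hc)
    (fun s hs hne =>
      hasDerivAt_structuralFun hβ0.ne' (hs₀ s hne) (hc s (Ioo_subset_Icc_self hs)))
    (fun s hs _ => structuralFunDeriv_nonneg hβ1.le hα0.le ((le_div_iff₀ hβ0).1 hα)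
      (hM s (Ioo_subset_Icc_self hs)) hμ.le)

/-- For the model Hamiltonian `H(m,p) = (1/β)|p|^β/(m+μ)^α` with `μ > 0`, `1 < β ≤ 2`,
`0 < α ≤ 4(β-1)/β`, the function
`h(s) = -z H(m_s,p_s) + m_s ∇_p H(m_s,p_s)·r` is nondecreasing on `[0,1]`. -/
theorem stmt6 (N : ℕ) (hN : 1 ≤ N) (μ α β : ℝ) (hμ : 0 < μ) (hβ1 : 1 < β) (hβ2 : β ≤ 2)
    (hα0 : 0 < α) (hα : α ≤ 4 * (β - 1) / β)
    (m z : ℝ) (p r : EuclideanSpace ℝ (Fin N)) (hm : 0 ≤ m) (hz : -m ≤ z)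
    (hzr : (z, r) ≠ (0, 0)) :
    MonotoneOn (fun s : ℝ =>
      -z * ((1 / β) * ‖p + s • r‖ ^ β / (m + s * z + μ) ^ α)
        + (m + s * z) *
          (inner ℝ ((‖p + s • r‖ ^ (β - 2) / (m + s * z + μ) ^ α) • (p + s • r)) r : ℝ))
      (Set.Icc 0 1) :=
  stmt6_general N μ α β hμ hβ1 hα0 hα m z p r hm hz
end

section
/- Let 1 < β ≤ 2, α > 0, μ ≥ 0, and suppose H(m,p) satisfies: H(m,p) ≥ c₀ |p|^β(m+μ)^{-α} - c₁(1 + m^{α/(β-1)}), |∇_p H(m,p)| ≤ c₂(1 + |p|^{β-1}(m+μ)^{-α}), and ∇_p H(m,p)·p ≥ (1+σ)H(m,p) - c₃(1 + m^{α/(β-1)}), with c₀,c₁,c₂,c₃,σ > 0. Then there exist nonnegative constants C₀, C₁, C₂ (depending only on c₀,…,c₃,σ,α,β,μ) such that for all m ≥ 0 with m+μ > 0 and all p ∈ ℝ^N: m^{α/(β-1)+1}(|∇_p H(m,p)|² - C₀) ≤ C₁ m (∇_p H(m,p)·p - H(m,p) + C₂). -/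
/-!
Write `γ = α/(β-1)`, `M = m + μ` and `A = |p|^β M^{-α}`. By (grow), `|∇_p H|² ≤ 2c₂²(1 + |p|^{2(β-1)} M^{-2α})`,
and with `θ = 2(β-1)/β ∈ (0,1]` (this is where `β ≤ 2` enters) the bad term factors as
`m^γ |p|^{2(β-1)} M^{-2α} = (m^γ)^{1-θ} (m^{2α/β} / M^{2α/β}) A^θ ≤ (m^γ)^{1-θ} A^θ ≤ m^γ + A` by Young's inequality.
On the other side, (conv) and then (coerc) give `∇_p H·p - H ≥ σH - c₃(1+m^γ) ≥ σc₀A - (σc₁+c₃)(1+m^γ)`,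
so choosing `C₁ σ c₀ = 2c₂²` absorbs the `A` term and the remaining terms are multiples of `m^{γ+1}`.
-/

open Real

lemma rpow_one_sub_mul_rpow_le_add {a b θ : ℝ} (ha : 0 ≤ a) (hb : 0 ≤ b) (hθ0 : 0 ≤ θ)
    (hθ1 : θ ≤ 1) : a ^ (1 - θ) * b ^ θ ≤ a + b := by
  have h := geom_mean_le_arith_mean2_weighted (sub_nonneg.2 hθ1) hθ0 ha hb (sub_add_cancel 1 θ)
  linarith [mul_nonneg hθ0 ha, mul_nonneg (sub_nonneg.2 hθ1) hb]

lemma sq_rpow_sub_one_div_rpow {q M α β : ℝ} (hq : 0 ≤ q) (hM : 0 < M) (hβ : 0 < β) :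
    (q ^ (β - 1) / M ^ α) ^ 2
      = (q ^ β / M ^ α) ^ (2 * (β - 1) / β) / M ^ (2 * α / β) := by
  rw [div_rpow (rpow_nonneg hq _) (rpow_nonneg hM.le _), ← rpow_mul hq, ← rpow_mul hM.le,
    div_div, ← rpow_add hM, div_pow, ← rpow_natCast, ← rpow_natCast, ← rpow_mul hq,
    ← rpow_mul hM.le]
  congr 2 <;> field_simp <;> ring

lemma rpow_mul_sq_rpow_div_rpow_le {m M q α β : ℝ} (hm : 0 ≤ m) (hmM : m ≤ M) (hq : 0 ≤ q)
    (hM : 0 < M) (hα : 0 ≤ α) (hβ1 : 1 < β) (hβ2 : β ≤ 2) :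
    m ^ (α / (β - 1)) * (q ^ (β - 1) / M ^ α) ^ 2 ≤ q ^ β / M ^ α + m ^ (α / (β - 1)) := by
  have hβ : β - 1 ≠ 0 := by linarith
  set y := m ^ (α / (β - 1))
  set A := q ^ β / M ^ α
  set θ := 2 * (β - 1) / β
  set K := M ^ (2 * α / β)
  have hy : 0 ≤ y := rpow_nonneg hm _
  have hA : 0 ≤ A := by positivity
  have hθ0 : 0 ≤ θ := by positivity
  have hθ1 : θ ≤ 1 := by rw [div_le_one (by linarith)]; linarith
  have hK : 0 < K := rpow_pos_of_pos hM _
  have hyθ : y ^ θ ≤ K := by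
    rw [← rpow_mul hm, show α / (β - 1) * θ = 2 * α / β by simp only [θ]; field_simp]
    exact rpow_le_rpow hm hmM (by positivity)
  calc y * (q ^ (β - 1) / M ^ α) ^ 2 = y ^ (1 - θ) * (y ^ θ * A ^ θ / K) := by
        have hsplit : y = y ^ (1 - θ) * y ^ θ := by
          rw [← rpow_add' hy (by norm_num), sub_add_cancel, rpow_one]
        rw [sq_rpow_sub_one_div_rpow hq hM (by linarith)]
        nth_rw 1 [hsplit]
        ring
    _ ≤ y ^ (1 - θ) * A ^ θ := by
        gcongr
        rw [div_le_iff₀ hK]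
        exact mul_le_mul_of_nonneg_right hyθ (rpow_nonneg hA _) |>.trans_eq (mul_comm _ _)
    _ ≤ A + y := by rw [add_comm]; exact rpow_one_sub_mul_rpow_le_add hy hA hθ0 hθ1

theorem stmt10_general (N : ℕ) (α β μ σ c₀ c₁ c₂ c₃ : ℝ)
    (hβ1 : 1 < β) (hβ2 : β ≤ 2) (hα : 0 < α) (hμ0 : 0 ≤ μ)
    (hc₀ : 0 < c₀) (hc₁ : 0 < c₁) (hc₃ : 0 < c₃) (hσ : 0 < σ)
    (H : ℝ → EuclideanSpace ℝ (Fin N) → ℝ)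
    (Hp : ℝ → EuclideanSpace ℝ (Fin N) → EuclideanSpace ℝ (Fin N))
    (coerc : ∀ (m : ℝ) (p : EuclideanSpace ℝ (Fin N)), 0 ≤ m → 0 < m + μ →
      c₀ * ‖p‖ ^ β / (m + μ) ^ α - c₁ * (1 + m ^ (α / (β - 1))) ≤ H m p)
    (grow : ∀ (m : ℝ) (p : EuclideanSpace ℝ (Fin N)), 0 ≤ m → 0 < m + μ →
      ‖Hp m p‖ ≤ c₂ * (1 + ‖p‖ ^ (β - 1) / (m + μ) ^ α))
    (conv : ∀ (m : ℝ) (p : EuclideanSpace ℝ (Fin N)), 0 ≤ m → 0 < m + μ →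
      (1 + σ) * H m p - c₃ * (1 + m ^ (α / (β - 1))) ≤ (inner ℝ (Hp m p) p : ℝ)) :
    ∃ C₀ C₁ C₂ : ℝ, 0 ≤ C₀ ∧ 0 ≤ C₁ ∧ 0 ≤ C₂ ∧
      ∀ (m : ℝ) (p : EuclideanSpace ℝ (Fin N)), 0 ≤ m → 0 < m + μ →
        m ^ (α / (β - 1) + 1) * (‖Hp m p‖ ^ 2 - C₀)
          ≤ C₁ * m * ((inner ℝ (Hp m p) p : ℝ) - H m p + C₂) := by
  set C₁ := 2 * c₂ ^ 2 / (σ * c₀)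
  set C₂ := σ * c₁ + c₃
  have hC₁ : C₁ * (σ * c₀) = 2 * c₂ ^ 2 := div_mul_cancel₀ _ (by positivity)
  refine ⟨4 * c₂ ^ 2 + C₁ * C₂, C₁, C₂, by positivity, by positivity, by positivity, ?_⟩
  intro m p hm hM
  set γ := α / (β - 1)
  set x := ‖p‖ ^ (β - 1) / (m + μ) ^ α
  set A := ‖p‖ ^ β / (m + μ) ^ α
  have hgrad : ‖Hp m p‖ ^ 2 ≤ 2 * c₂ ^ 2 * (1 + x ^ 2) := by
    have h := pow_le_pow_left₀ (norm_nonneg _) (grow m p hm hM) 2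
    nlinarith [sq_nonneg (1 - x)]
  have hinterp : m ^ γ * x ^ 2 ≤ A + m ^ γ :=
    rpow_mul_sq_rpow_div_rpow_le hm (by linarith) (norm_nonneg p) hM hα.le hβ1 hβ2
  have hgap : σ * c₀ * A - C₂ * (1 + m ^ γ) ≤ inner ℝ (Hp m p) p - H m p := by
    have h := mul_le_mul_of_nonneg_left (coerc m p hm hM) hσ.le
    rw [mul_div_assoc] at h
    linarith [conv m p hm hM]
  rw [rpow_add' hm (by positivity), rpow_one]
  have hmγ : 0 ≤ m ^ γ := rpow_nonneg hm _
  have hgrad' := mul_le_mul_of_nonneg_left hgrad (mul_nonneg hmγ hm)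
  have hinterp' := mul_le_mul_of_nonneg_left hinterp (by positivity : 0 ≤ 2 * c₂ ^ 2 * m)
  have hgap' := mul_le_mul_of_nonneg_left hgap (by positivity : 0 ≤ C₁ * m)
  have habsorb : C₁ * m * (σ * c₀ * A) = 2 * c₂ ^ 2 * m * A := by rw [← hC₁]; ring
  linarith

/-- Under the structure conditions (coerc), (grow), (conv), there exist nonnegative constants
`C₀, C₁, C₂` such that `m^{α/(β-1)+1}(|∇_p H|² - C₀) ≤ C₁ m (∇_p H·p - H + C₂)`. -/
theorem stmt10 (N : ℕ) (hN : 1 ≤ N) (α β μ σ c₀ c₁ c₂ c₃ : ℝ)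
    (hβ1 : 1 < β) (hβ2 : β ≤ 2) (hα : 0 < α) (hμ0 : 0 ≤ μ) (hμ1 : μ ≤ 1)
    (hc₀ : 0 < c₀) (hc₁ : 0 < c₁) (hc₂ : 0 < c₂) (hc₃ : 0 < c₃) (hσ : 0 < σ)
    (H : ℝ → EuclideanSpace ℝ (Fin N) → ℝ)
    (Hp : ℝ → EuclideanSpace ℝ (Fin N) → EuclideanSpace ℝ (Fin N))
    (coerc : ∀ (m : ℝ) (p : EuclideanSpace ℝ (Fin N)), 0 ≤ m → 0 < m + μ →
      c₀ * ‖p‖ ^ β / (m + μ) ^ α - c₁ * (1 + m ^ (α / (β - 1))) ≤ H m p)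
    (grow : ∀ (m : ℝ) (p : EuclideanSpace ℝ (Fin N)), 0 ≤ m → 0 < m + μ →
      ‖Hp m p‖ ≤ c₂ * (1 + ‖p‖ ^ (β - 1) / (m + μ) ^ α))
    (conv : ∀ (m : ℝ) (p : EuclideanSpace ℝ (Fin N)), 0 ≤ m → 0 < m + μ →
      (1 + σ) * H m p - c₃ * (1 + m ^ (α / (β - 1))) ≤ (inner ℝ (Hp m p) p : ℝ)) :
    ∃ C₀ C₁ C₂ : ℝ, 0 ≤ C₀ ∧ 0 ≤ C₁ ∧ 0 ≤ C₂ ∧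
      ∀ (m : ℝ) (p : EuclideanSpace ℝ (Fin N)), 0 ≤ m → 0 < m + μ →
        m ^ (α / (β - 1) + 1) * (‖Hp m p‖ ^ 2 - C₀)
          ≤ C₁ * m * ((inner ℝ (Hp m p) p : ℝ) - H m p + C₂) :=
  stmt10_general N α β μ σ c₀ c₁ c₂ c₃ hβ1 hβ2 hα hμ0 hc₀ hc₁ hc₃ hσ H Hp coerc grow conv
end
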